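/- arXiv:2201.00782 — 3 statements merged into one kernel-verified Lean document; each statement's English description precedes it below -/
import Mathlib

section
/- For every natural number n, the number of binary words of length n such that every maximal factor of the form 0^a 1^b with a > 0 satisfies a > b equals the Fibonacci number F(n+2) (with F(1)=F(2)=1). -/
/-!
Read words from the right. Validity splits at every factor `10`, and a single block `0^a 1^b`
with `a > 0` is valid iff `b < a`; hence `u 0 1^b` is valid iff `u = u' 0^b` with `u'` valid.
So the number `P b n = prefixCount b n` of words `u` of length `n` with `u 1^b` valid satisfies
`P b (n + 1) = P (b + 1) n + P 0 (n - b)`, the last term being absent when `n < b`, and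
`P b (n + b) = F (n + 2)` follows by induction on `n`; the theorem is the case `b = 0`.
-/

/-- `isValid c d w` says every maximal factor of `w` of the form `0^a 1^b`
with `a > 0` satisfies `a * (c/d) > b`, i.e. `c*a > d*b`.
Here `false` plays the role of `0` and `true` of `1`; maximality is expressed
by requiring the prefix to end with `1` (or be empty) and the suffix to start
with `0` (or be empty). -/
def isValid (c d : ℕ) (w : List Bool) : Prop :=
  ∀ p s : List Bool, ∀ a b : ℕ,
    w = p ++ List.replicate a false ++ List.replicate b true ++ s →
    (p = [] ∨ p.getLast? = some true) →
    (s = [] ∨ s.head? = some false) →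
    0 < a → d * b < c * a

/-- number of words of length `n` in `W_{c/d,n}` -/
noncomputable def wcount (c d n : ℕ) : ℕ :=
  Nat.card {w : List Bool // w.length = n ∧ isValid c d w}

open List

theorem append_ne_replicate_append_replicate {t r : List Bool}
    (ht : t.getLast? = some true) (hr : r.head? = some false) (a b : ℕ) :
    t ++ r ≠ replicate a false ++ replicate b true := by
  intro h
  rcases append_eq_append_iff.mp h with ⟨q, hq, -⟩ | ⟨q, -, hq⟩
  · have : true ∈ replicate a false := hq ▸ mem_append_left q (mem_of_getLast? ht)
    simp at this
  · have : false ∈ replicate b true := hq ▸ mem_append_right q (mem_of_mem_head? hr)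
    simp at this

theorem exists_eq_append_replicate_false (u : List Bool) :
    ∃ p k, (p = [] ∨ p.getLast? = some true) ∧ u = p ++ replicate k false := by
  induction u using List.reverseRecOn with
  | nil => exact ⟨[], 0, Or.inl rfl, rfl⟩
  | append_singleton u x ih =>
    cases x with
    | true => exact ⟨u ++ [true], 0, Or.inr (by simp), by simp⟩
    | false =>
      obtain ⟨p, k, hp, rfl⟩ := ih
      exact ⟨p, k + 1, hp, by simp [replicate_succ']⟩

theorem append_eq_nil_or_head?_eq_false {s v : List Bool}
    (hs : s = [] ∨ s.head? = some false) (hv : v = [] ∨ v.head? = some false) :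
    s ++ v = [] ∨ (s ++ v).head? = some false := by
  rcases hs with rfl | hs
  · simpa using hv
  · simp [head?_append, hs]

theorem append_eq_nil_or_getLast?_eq_true {u p : List Bool}
    (hu : u = [] ∨ u.getLast? = some true) (hp : p = [] ∨ p.getLast? = some true) :
    u ++ p = [] ∨ (u ++ p).getLast? = some true := by
  rcases hp with rfl | hp
  · simpa using hu
  · simp [getLast?_append, hp]

section

variable {c d : ℕ}

theorem isValid_append_iff {u v : List Bool} (hu : u = [] ∨ u.getLast? = some true)
    (hv : v = [] ∨ v.head? = some false) :
    isValid c d (u ++ v) ↔ isValid c d u ∧ isValid c d v := by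
  refine ⟨fun h => ⟨fun p s a b hw hp hs ha => ?_, fun p s a b hw hp hs ha => ?_⟩, ?_⟩
  · exact h p (s ++ v) a b (by simp [hw]) hp (append_eq_nil_or_head?_eq_false hs hv) ha
  · exact h (u ++ p) s a b (by simp [hw]) (append_eq_nil_or_getLast?_eq_true hu hp) hs ha
  rintro ⟨hU, hV⟩ p s a b hw hp hs ha
  rw [append_assoc, append_assoc, ← append_assoc (replicate a false)] at hw
  rcases append_eq_append_iff.mp hw with ⟨t, rfl, rfl⟩ | ⟨t, rfl, hblock⟩
  · refine hV t s a b (by simp) ?_ hs ha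
    rcases eq_or_ne t [] with rfl | ht
    · exact Or.inl rfl
    · right
      simpa [getLast?_append_of_ne_nil _ ht] using hp.resolve_left (by simp [ht])
  rcases append_eq_append_iff.mp hblock with ⟨r, rfl, rfl⟩ | ⟨r, hr, rfl⟩
  · refine hU p r a b (by simp) hp ?_ ha
    rcases eq_or_ne r [] with rfl | hr
    · exact Or.inl rfl
    · simpa [head?_append, hr] using hs
  rcases eq_or_ne t [] with rfl | ht
  · exact hV [] s a b (by simp [hr]) (Or.inl rfl) hs ha
  rcases eq_or_ne r [] with rfl | hr'
  · exact hU p [] a b (by simp [hr]) hp (Or.inl rfl) ha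
  -- otherwise the block `0^a 1^b` would contain the factor `10` where `u` meets `v`
  refine absurd hr.symm (append_ne_replicate_append_replicate ?_ ?_ a b)
  · simpa [getLast?_append_of_ne_nil _ ht] using hu.resolve_left (by simp [ht])
  · simpa [head?_append, hr'] using hv

theorem isValid_replicate_true (b : ℕ) : isValid c d (replicate b true) := by
  intro p s a b' hw _ _ ha
  have : false ∈ replicate b true := by
    rw [hw]; simp [mem_replicate, ha.ne']
  simp at this

theorem isValid_replicate_append_replicate_iff {a b : ℕ} (ha : 0 < a) :
    isValid c d (replicate a false ++ replicate b true) ↔ d * b < c * a := by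
  refine ⟨fun h => h [] [] a b (by simp) (Or.inl rfl) (Or.inl rfl) ha, ?_⟩
  intro h p s a' b' hw hp hs ha'
  rcases Nat.eq_zero_or_pos b' with rfl | hb'
  · have : 0 < c := Nat.pos_of_mul_pos_right (by omega : 0 < c * a)
    simpa using Nat.mul_pos this ha'
  have hp : p = [] := by
    refine hp.resolve_right fun hp => append_ne_replicate_append_replicate hp
      (r := replicate a' false ++ replicate b' true ++ s) ?_ a b (by simp [hw])
    cases a' <;> simp_all [replicate_succ]
  subst hp
  have hs : s = [] := by
    refine hs.resolve_right fun hs => append_ne_replicate_append_replicate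
      (t := replicate a' false ++ replicate b' true) ?_ hs a b (by simp [hw])
    cases b' <;> simp_all [replicate_succ']
  subst hs
  obtain rfl : a = a' := by simpa [count_replicate] using congrArg (count false) hw
  obtain rfl : b = b' := by simpa [count_replicate] using congrArg (count true) hw
  exact h

theorem isValid_append_replicate_append_replicate_iff {p : List Bool} {a b : ℕ}
    (hp : p = [] ∨ p.getLast? = some true) (ha : 0 < a) :
    isValid c d (p ++ replicate a false ++ replicate b true) ↔
      isValid c d p ∧ d * b < c * a := by
  have hblock : replicate a false ++ replicate b true = [] ∨
      (replicate a false ++ replicate b true).head? = some false := by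
    cases a <;> simp_all [replicate_succ]
  rw [append_assoc, isValid_append_iff hp hblock, isValid_replicate_append_replicate_iff ha]

theorem isValid_append_replicate_false_iff (hc : 0 < c) {p : List Bool} {k : ℕ}
    (hp : p = [] ∨ p.getLast? = some true) :
    isValid c d (p ++ replicate k false) ↔ isValid c d p := by
  rcases Nat.eq_zero_or_pos k with rfl | hk
  · simp
  · simpa [Nat.mul_pos hc hk] using
      isValid_append_replicate_append_replicate_iff (c := c) (d := d) (b := 0) hp hk

end

theorem isValid_append_false_cons_replicate_true_iff (u : List Bool) (b : ℕ) :
    isValid 1 1 (u ++ false :: replicate b true) ↔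
      ∃ u', u = u' ++ replicate b false ∧ isValid 1 1 u' := by
  constructor
  · obtain ⟨p, k, hp, rfl⟩ := exists_eq_append_replicate_false u
    intro h
    rw [show p ++ replicate k false ++ false :: replicate b true
        = p ++ replicate (k + 1) false ++ replicate b true by simp [replicate_succ'],
      isValid_append_replicate_append_replicate_iff hp k.succ_pos] at h
    refine ⟨p ++ replicate (k - b) false, ?_, ?_⟩
    · rw [append_assoc, replicate_append_replicate, Nat.sub_add_cancel (by omega)]
    · exact (isValid_append_replicate_false_iff one_pos hp).mpr h.1
  · rintro ⟨u', rfl, hu'⟩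
    obtain ⟨p, k, hp, rfl⟩ := exists_eq_append_replicate_false u'
    rw [show p ++ replicate k false ++ replicate b false ++ false :: replicate b true
        = p ++ replicate (k + b + 1) false ++ replicate b true by simp [replicate_succ'],
      isValid_append_replicate_append_replicate_iff hp (by omega)]
    exact ⟨(isValid_append_replicate_false_iff one_pos hp).mp hu', by omega⟩

theorem ncard_setOf_length_succ (P : List Bool → Prop) (n : ℕ) :
    {u : List Bool | u.length = n + 1 ∧ P u}.ncard =
      {u | u.length = n ∧ P (u ++ [true])}.ncard +
        {u | u.length = n ∧ P (u ++ [false])}.ncard := by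
  have hsplit : {u : List Bool | u.length = n + 1 ∧ P u} =
      (· ++ [true]) '' {u | u.length = n ∧ P (u ++ [true])} ∪
        (· ++ [false]) '' {u | u.length = n ∧ P (u ++ [false])} := by
    ext u
    rcases u.eq_nil_or_concat' with rfl | ⟨u, x, rfl⟩
    · simp
    · cases x <;> simp
  have hfin (Q : List Bool → Prop) : {u : List Bool | u.length = n ∧ Q u}.Finite :=
    (finite_length_eq Bool n).subset fun _ hu => hu.1
  have hdisj : Disjoint ((· ++ [true]) '' {u | u.length = n ∧ P (u ++ [true])})
      ((· ++ [false]) '' {u | u.length = n ∧ P (u ++ [false])}) := by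
    refine Set.disjoint_left.2 ?_
    rintro _ ⟨u, -, rfl⟩ ⟨v, -, h⟩
    simpa using congrArg getLast? h
  rw [hsplit, Set.ncard_union_eq hdisj ((hfin _).image _) ((hfin _).image _),
    Set.ncard_image_of_injective _ (append_left_injective _),
    Set.ncard_image_of_injective _ (append_left_injective _)]

noncomputable def prefixCount (b n : ℕ) : ℕ :=
  {u : List Bool | u.length = n ∧ isValid 1 1 (u ++ replicate b true)}.ncard

theorem prefixCount_succ (b n : ℕ) :
    prefixCount b (n + 1) =
      prefixCount (b + 1) n + {u : List Bool | u.length + b = n ∧ isValid 1 1 u}.ncard := by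
  have hzeros :
      {u : List Bool | u.length = n ∧ isValid 1 1 (u ++ [false] ++ replicate b true)} =
        (· ++ replicate b false) '' {u | u.length + b = n ∧ isValid 1 1 u} := by
    ext u
    simp only [Set.mem_ofPred_eq, append_assoc, singleton_append,
      isValid_append_false_cons_replicate_true_iff, Set.mem_image]
    constructor
    · rintro ⟨rfl, u', rfl, hu'⟩
      exact ⟨u', ⟨by simp, hu'⟩, rfl⟩
    · rintro ⟨u', ⟨rfl, hu'⟩, rfl⟩
      exact ⟨by simp, u', rfl, hu'⟩
  rw [prefixCount, ncard_setOf_length_succ, hzeros,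
    Set.ncard_image_of_injective _ (append_left_injective _)]
  simp [prefixCount, replicate_succ]

theorem prefixCount_eq_one {b n : ℕ} (h : n ≤ b) : prefixCount b n = 1 := by
  induction n generalizing b with
  | zero =>
    have hsingle :
        {u : List Bool | u.length = 0 ∧ isValid 1 1 (u ++ replicate b true)} = {[]} := by
      ext u
      simp only [Set.mem_ofPred_eq, Set.mem_singleton_iff, length_eq_zero_iff,
        and_iff_left_iff_imp]
      rintro rfl
      exact isValid_replicate_true b
    rw [prefixCount, hsingle, Set.ncard_singleton]
  | succ n ih =>
    have hempty : {u : List Bool | u.length + b = n ∧ isValid 1 1 u} = ∅ := by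
      ext u; simp only [Set.mem_ofPred_eq, Set.mem_empty_iff_false, iff_false]; omega
    rw [prefixCount_succ, hempty, Set.ncard_empty, ih (by omega)]

theorem prefixCount_add_eq_fib (n b : ℕ) : prefixCount b (n + b) = Nat.fib (n + 2) := by
  induction n using Nat.strong_induction_on generalizing b with
  | _ n ih =>
    rcases n with _ | m
    · simpa using prefixCount_eq_one (le_refl b)
    have hones : prefixCount (b + 1) (m + b) = Nat.fib (m + 1) := by
      rcases m with _ | k
      · simpa using prefixCount_eq_one (Nat.le_succ b)
      · convert ih k (by omega) (b + 1) using 2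
        omega
    have hfree :
        {u : List Bool | u.length + b = m + b ∧ isValid 1 1 u}.ncard = Nat.fib (m + 2) := by
      simpa [prefixCount] using ih m (by omega) 0
    rw [Nat.add_right_comm, prefixCount_succ, hones, hfree]
    exact (Nat.fib_add_two (n := m + 1)).symm

theorem stmt0 (n : ℕ) : wcount 1 1 n = Nat.fib (n + 2) := by
  show {w : List Bool | w.length = n ∧ isValid 1 1 w}.ncard = _
  simpa [prefixCount] using prefixCount_add_eq_fib n 0
end

section
/- For every natural number n, the number of binary words of length n such that every maximal factor of the form 0^a 1^b with a > 0 satisfies 2a > b equals the Tribonacci number T(n) where T satisfies T(n)=T(n-1)+T(n-2)+T(n-3) with T(0)=1, T(1)=2, T(2)=4. -/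
/-- Tribonacci numbers with T 0 = 1, T 1 = 2, T 2 = 4. -/
def trib : ℕ → ℕ
  | 0 => 1
  | 1 => 2
  | 2 => 4
  | n + 3 => trib (n + 2) + trib (n + 1) + trib n

/-!
A valid word of length `n + 3` ends in `0`, `01` or `11`. Deleting a final `0` or `01` gives
a bijection onto the valid words of length `n + 2`, resp. `n + 1`; a word ending in `11` has
a last block `0^a 1^b` with `b ≥ 2`, hence `a ≥ 2`, and `0^a 1^b ↦ 0^(a-1) 1^(b-2)` is a
bijection onto the valid words of length `n`, since `2a > b ↔ 2(a-1) > b-2`.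

Reading words from the end with an automaton whose state is the current block
(`RevAccepts`), these bijections become recursions for the number of words of each length
accepted from a given state.
-/

noncomputable def wordCount (P : List Bool → Prop) (n : ℕ) : ℕ :=
  {w : List Bool | w.length = n ∧ P w}.ncard

open Classical in
theorem wordCount_zero (P : List Bool → Prop) : wordCount P 0 = if P [] then 1 else 0 := by
  have : {w : List Bool | w.length = 0 ∧ P w} = if P [] then {[]} else ∅ := by
    ext (_ | _) <;> split_ifs <;> simp [*]
  rw [wordCount, this]
  split_ifs <;> simp

theorem wordCount_eq_zero {P : List Bool → Prop} (hP : ∀ w, ¬ P w) (n : ℕ) :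
    wordCount P n = 0 := by
  simp [wordCount, hP]

theorem wordCount_succ (P : List Bool → Prop) (n : ℕ) :
    wordCount P (n + 1) =
      wordCount (fun w => P (false :: w)) n + wordCount (fun w => P (true :: w)) n := by
  have hsplit : {w : List Bool | w.length = n + 1 ∧ P w} =
      List.cons false '' {w | w.length = n ∧ P (false :: w)} ∪
        List.cons true '' {w | w.length = n ∧ P (true :: w)} := by
    ext (_ | ⟨_ | _, w⟩) <;> simp
  have hfin (Q : List Bool → Prop) : {w : List Bool | w.length = n ∧ Q w}.Finite :=
    (List.finite_length_eq Bool n).subset fun _ h => h.1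
  have hdisj : Disjoint (List.cons false '' {w | w.length = n ∧ P (false :: w)})
      (List.cons true '' {w | w.length = n ∧ P (true :: w)}) := by
    rw [Set.disjoint_left]
    rintro _ ⟨w, -, rfl⟩ ⟨w', -, h⟩
    simp at h
  rw [wordCount, hsplit, Set.ncard_union_eq hdisj ((hfin _).image _) ((hfin _).image _),
    Set.ncard_image_of_injective _ List.cons_injective,
    Set.ncard_image_of_injective _ List.cons_injective]
  rfl

theorem wordCount_congr {P Q : List Bool → Prop} (h : ∀ w, P w ↔ Q w) (n : ℕ) :
    wordCount P n = wordCount Q n := by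
  rw [funext fun w => propext (h w)]

theorem wordCount_reverse (P : List Bool → Prop) (n : ℕ) :
    wordCount (fun w => P w.reverse) n = wordCount P n := by
  rw [wordCount, ← Set.ncard_image_of_injective _ List.reverse_injective]
  congr 1
  ext w
  simp only [Set.mem_image, Set.mem_ofPred_eq]
  exact ⟨fun ⟨v, ⟨hv, hP⟩, hw⟩ => hw ▸ ⟨by simpa using hv, hP⟩,
    fun ⟨hw, hP⟩ => ⟨w.reverse, ⟨by simpa using hw, by simpa using hP⟩, by simp⟩⟩

/-- The automaton reading a word from its last letter: `b` ones and then `a` zeros of the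
current block `0^a 1^b` have been read so far. -/
def RevAccepts (c d : ℕ) : List Bool → ℕ → ℕ → Prop
  | [], b, a => a = 0 ∨ d * b < c * a
  | true :: r, b, 0 => RevAccepts c d r (b + 1) 0
  | true :: r, b, a + 1 => d * b < c * (a + 1) ∧ RevAccepts c d r 1 0
  | false :: r, b, a => RevAccepts c d r b (a + 1)

namespace RevAccepts

variable {c d : ℕ}

theorem replicate_true_append (k : ℕ) (r : List Bool) (b : ℕ) :
    RevAccepts c d (List.replicate k true ++ r) b 0 ↔ RevAccepts c d r (b + k) 0 := by
  induction k generalizing b with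
  | zero => rfl
  | succ k ih =>
    rw [List.replicate_succ, List.cons_append, show b + (k + 1) = b + 1 + k by omega]
    exact ih _

theorem replicate_false_append (k : ℕ) (r : List Bool) (b a : ℕ) :
    RevAccepts c d (List.replicate k false ++ r) b a ↔ RevAccepts c d r b (a + k) := by
  induction k generalizing a with
  | zero => rfl
  | succ k ih =>
    rw [List.replicate_succ, List.cons_append, show a + (k + 1) = a + 1 + k by omega]
    exact ih _

theorem anti {r : List Bool} {b b' a : ℕ} (hb : b' ≤ b) (h : RevAccepts c d r b a) :
    RevAccepts c d r b' a := by
  induction r generalizing b b' a with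
  | nil => exact h.imp_right (lt_of_le_of_lt (Nat.mul_le_mul_left d hb))
  | cons x r ih =>
    rcases x with _ | _
    · exact ih hb h
    · rcases a with _ | a
      · exact ih (Nat.add_le_add_right hb 1) h
      · exact ⟨lt_of_le_of_lt (Nat.mul_le_mul_left d hb) h.1, h.2⟩

theorem of_append {u r : List Bool} {b a : ℕ} (h : RevAccepts c d (u ++ r) b a) :
    ∃ b' a', RevAccepts c d r b' a' := by
  induction u generalizing b a with
  | nil => exact ⟨b, a, h⟩
  | cons x u ih =>
    rcases x with _ | _
    · exact ih h
    · rcases a with _ | a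
      · exact ih h
      · exact ih h.2

theorem of_true_cons {r : List Bool} {b a : ℕ} (h : RevAccepts c d (true :: r) b a) :
    RevAccepts c d r 1 0 := by
  rcases a with _ | a
  · exact anti (Nat.le_add_left 1 b) h
  · exact h.2

theorem mul_lt_of_head {r : List Bool} {b a : ℕ} (hr : r = [] ∨ r.head? = some true)
    (ha : 0 < a) (h : RevAccepts c d r b a) : d * b < c * a := by
  obtain ⟨a, rfl⟩ := Nat.exists_eq_add_one_of_ne_zero ha.ne'
  rcases hr with rfl | hr
  · exact h.resolve_left (Nat.succ_ne_zero a)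
  · obtain ⟨_ | _, r⟩ := r <;> simp_all [RevAccepts]

/-- The prefix `u` is arbitrary: ones read before the block only make it worse (`anti`). -/
theorem not_of_bad_block (u v : List Bool) {m k b a : ℕ}
    (hv : v = [] ∨ v.head? = some true) (hm : 0 < m) (hk : 0 < k) (hbad : c * k ≤ d * m) :
    ¬ RevAccepts c d (u ++ (List.replicate m true ++ (List.replicate k false ++ v))) b a := by
  intro h
  obtain ⟨m, rfl⟩ := Nat.exists_eq_add_one_of_ne_zero hm.ne'
  rw [List.replicate_succ, List.cons_append] at h
  obtain ⟨b', a', h⟩ := of_append h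
  have h := of_true_cons h
  rw [replicate_true_append, replicate_false_append] at h
  have := mul_lt_of_head hv (by omega) h
  rw [Nat.add_comm 1 m, Nat.zero_add] at this
  omega

theorem iff_of_mul_lt {r : List Bool} {b : ℕ} (hb : d * b < c) (a : ℕ) :
    RevAccepts c d r b (a + 1) ↔ RevAccepts c d r 0 0 := by
  induction r generalizing b a with
  | nil =>
    exact iff_of_true (Or.inr (hb.trans_le (Nat.le_mul_of_pos_right c a.succ_pos)))
      (Or.inl rfl)
  | cons x r ih =>
    rcases x with _ | _
    · have hc : d * 0 < c := by simpa using Nat.zero_lt_of_lt hb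
      exact (ih hb (a + 1)).trans (ih hc 0).symm
    · exact and_iff_right (hb.trans_le (Nat.le_mul_of_pos_right c a.succ_pos))

theorem add_iff {r : List Bool} {b a : ℕ} :
    RevAccepts c d r (b + c) (a + d + 1) ↔ RevAccepts c d r b (a + 1) := by
  induction r generalizing a with
  | nil =>
    refine or_congr (by omega) ?_
    constructor <;> intro h <;> nlinarith
  | cons x r ih =>
    rcases x with _ | _
    · have h := ih (a := a + 1)
      rwa [Nat.add_right_comm a 1 d] at h
    · refine and_congr_left fun _ => ?_
      constructor <;> intro h <;> nlinarith

end RevAccepts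

theorem isValid_of_append {c d : ℕ} {x y : List Bool} (h : isValid c d (x ++ y))
    (hy : y = [] ∨ y.head? = some false) : isValid c d x := by
  intro p s a b hx hp hs ha
  refine h p (s ++ y) a b (by simp [hx]) hp ?_ ha
  rcases hs with rfl | hs
  · simpa using hy
  · simp [List.head?_append, hs]

theorem revAccepts_of_isValid {c d : ℕ} {r : List Bool} {b a : ℕ}
    (h : isValid c d (r.reverse ++ List.replicate a false ++ List.replicate b true)) :
    RevAccepts c d r b a := by
  induction r generalizing b a with
  | nil =>
    rcases a with _ | a
    · exact Or.inl rfl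
    · exact Or.inr (h [] [] (a + 1) b (by simp) (Or.inl rfl) (Or.inl rfl) a.succ_pos)
  | cons x r ih =>
    rcases x with _ | _
    · exact ih (by simpa [List.replicate_succ] using h)
    · rcases a with _ | a
      · exact ih (by simpa [List.replicate_succ] using h)
      · refine ⟨h (r.reverse ++ [true]) [] (a + 1) b (by simp) (by simp) (Or.inl rfl) a.succ_pos,
          ih ?_⟩
        refine isValid_of_append (y := List.replicate (a + 1) false ++ List.replicate b true) ?_
          (by simp [List.replicate_succ])
        simpa using h

theorem isValid_of_revAccepts {c d : ℕ} (hc : 0 < c) {w : List Bool}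
    (h : RevAccepts c d w.reverse 0 0) : isValid c d w := by
  intro p s a b hw hp hs ha
  by_contra hlt
  have hbad : c * a ≤ d * b := Nat.le_of_not_lt hlt
  have hb : 0 < b := Nat.pos_of_ne_zero fun hb => by
    have := Nat.mul_pos hc ha
    simp [hb] at hbad
    omega
  refine RevAccepts.not_of_bad_block s.reverse p.reverse ?_ hb ha hbad (b := 0) (a := 0) ?_
  · simpa [List.head?_reverse] using hp
  · simpa [hw] using h

theorem isValid_iff_revAccepts {c d : ℕ} (hc : 0 < c) (w : List Bool) :
    isValid c d w ↔ RevAccepts c d w.reverse 0 0 :=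
  ⟨fun h => revAccepts_of_isValid (by simpa using h), isValid_of_revAccepts hc⟩

noncomputable def revCount (b a n : ℕ) : ℕ :=
  wordCount (RevAccepts 2 1 · b a) n

theorem revCount_zero (b : ℕ) : revCount b 0 0 = 1 := by
  simp [revCount, wordCount_zero, RevAccepts]

theorem revCount_succ (b n : ℕ) : revCount b 0 (n + 1) = revCount b 1 n + revCount (b + 1) 0 n :=
  wordCount_succ _ n

theorem revCount_one_eq {b : ℕ} (hb : b ≤ 1) (n : ℕ) : revCount b 1 n = revCount 0 0 n :=
  wordCount_congr (fun _ => RevAccepts.iff_of_mul_lt (by omega) 0) n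

theorem revCount_add_two_one_succ (b n : ℕ) : revCount (b + 2) 1 (n + 1) = revCount b 1 n := by
  have hdead (w : List Bool) : ¬ RevAccepts 2 1 (true :: w) (b + 2) 1 := fun h => by
    simpa using h.1
  rw [revCount, wordCount_succ, wordCount_eq_zero hdead, add_zero]
  exact wordCount_congr (fun _ => RevAccepts.add_iff (a := 0)) n

theorem revCount_add_two_succ (b n : ℕ) : revCount (b + 2) 0 (n + 1) = revCount b 0 n := by
  induction n generalizing b with
  | zero =>
    rw [revCount_succ, revCount_zero, revCount_zero]
    simp [revCount, wordCount_zero, RevAccepts]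
  | succ n ih =>
    rw [revCount_succ, revCount_add_two_one_succ, Nat.add_right_comm, ih, revCount_succ]

theorem revCount_eq_trib (n : ℕ) : revCount 0 0 n = trib n := by
  have hN (n : ℕ) : revCount 0 0 (n + 1) = revCount 0 0 n + revCount 1 0 n := by
    rw [revCount_succ, revCount_one_eq zero_le_one]
  have hM (n : ℕ) : revCount 1 0 (n + 1) = revCount 0 0 n + revCount 2 0 n := by
    rw [revCount_succ, revCount_one_eq le_rfl]
  have hK (n : ℕ) : revCount 2 0 (n + 1) = revCount 0 0 n := revCount_add_two_succ 0 n
  induction n using trib.induct with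
  | case1 => exact revCount_zero 0
  | case2 => rw [hN, revCount_zero, revCount_zero]; rfl
  | case3 => rw [hN, hN, hM, revCount_zero, revCount_zero, revCount_zero]; rfl
  | case4 n ih₂ ih₁ ih₀ => rw [hN, hM, hK, ih₂, ih₁, ih₀, ← add_assoc]; rfl

theorem stmt1 (n : ℕ) : wcount 2 1 n = trib n := by
  calc wcount 2 1 n = wordCount (fun w => RevAccepts 2 1 w.reverse 0 0) n :=
        wordCount_congr (isValid_iff_revAccepts two_pos) n
    _ = trib n := (wordCount_reverse _ n).trans (revCount_eq_trib n)
end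

section
/- Let w_n = |W_{3/2,n}| be the number of binary words of length n such that every maximal factor of the form 0^a 1^b with a > 0 satisfies 3a > 2b. Then w_n = w_{n-1} + w_{n-2} + w_{n-4} + w_{n-5} for all n ≥ 5, and the sequence begins 1, 2, 4, 7, 13, 23, 42, 76, 138. -/
/-!
A word not beginning with `1` splits uniquely into admissible blocks `0^a 1^b` (`b > 0`,
`2b < 3a`) followed by a run of zeros, and it is valid exactly when each block is admissible;
a general valid word is a run of ones followed by such a word. Writing `U`, `W`, `B` for the
generating functions of these block words, of valid words and of admissible blocks, this gives
`U = 1/(1 - X) + B U` and `(1 - X) W = U`. There are `ℓ - ⌊2ℓ/5⌋ - 1` admissible blocks of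
length `ℓ`, a number that grows by `3` when `ℓ` grows by `5`, so
`(1 - X)(1 - X^5) B = X^2 + X^4 + X^6`. Eliminating `U` and `B` yields
`(1 - X - X^2 - X^4 - X^5) W = 1 + X + X^2 + X^3 + X^4`, whose coefficients are the recurrence
and the initial values.
-/

open List (replicate)

namespace List

variable {α : Type*}

theorem replicate_append_inj_of_head?_ne {x : α} {a a' : ℕ} {s s' : List α}
    (hs : s.head? ≠ some x) (hs' : s'.head? ≠ some x)
    (h : replicate a x ++ s = replicate a' x ++ s') : a = a' ∧ s = s' := by
  induction a generalizing a' with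
  | zero => cases a' <;> simp_all [replicate_succ]
  | succ a ih =>
    cases a' with
    | zero => subst h; simp [replicate_succ] at hs'
    | succ a' => simpa using ih (by simpa [replicate_succ] using h)

theorem exists_eq_replicate_append_head?_ne (x : α) (w : List α) :
    ∃ a s, w = replicate a x ++ s ∧ s.head? ≠ some x := by
  induction w with
  | nil => exact ⟨0, [], rfl, by simp⟩
  | cons y t ih =>
    by_cases hy : y = x
    · obtain ⟨a, s, rfl, hs⟩ := ih
      exact ⟨a + 1, s, by simp [hy, replicate_succ], hs⟩
    · exact ⟨0, y :: t, rfl, by simpa using hy⟩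

end List

variable {c d : ℕ}

section Words

open List

theorem getLast?_ne_some_false_iff {p : List Bool} :
    p.getLast? ≠ some false ↔ p = [] ∨ p.getLast? = some true := by
  rw [← getLast?_eq_none_iff]
  rcases p.getLast? with _ | _ | _ <;> simp

theorem head?_ne_some_true_iff {s : List Bool} :
    s.head? ≠ some true ↔ s = [] ∨ s.head? = some false := by
  rw [← head?_eq_none_iff]
  rcases s.head? with _ | _ | _ <;> simp

theorem block_append_inj {a b a' b' : ℕ} {s s' : List Bool} (hb : 0 < b) (hb' : 0 < b')
    (hs : s.head? ≠ some true) (hs' : s'.head? ≠ some true)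
    (h : replicate a false ++ replicate b true ++ s =
      replicate a' false ++ replicate b' true ++ s') :
    a = a' ∧ b = b' ∧ s = s' := by
  simp only [append_assoc] at h
  obtain ⟨rfl, hrest⟩ := replicate_append_inj_of_head?_ne
    (by simp [head?_append, head?_replicate, hb.ne'])
    (by simp [head?_append, head?_replicate, hb'.ne']) h
  obtain ⟨rfl, rfl⟩ := replicate_append_inj_of_head?_ne hs hs' hrest
  exact ⟨rfl, rfl, rfl⟩

theorem head?_ne_some_false_of_append_eq_block {a b : ℕ} {p m : List Bool}
    (h : p ++ m = replicate a false ++ replicate b true)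
    (hp : p.getLast? = some true) : m.head? ≠ some false := by
  intro hm
  have hsorted : (replicate a false ++ replicate b true).Pairwise (· ≤ ·) := by
    simp [pairwise_append, pairwise_replicate]
  rw [← h, pairwise_append] at hsorted
  exact absurd (hsorted.2.2 _ (mem_of_getLast? hp) _ (mem_of_head? hm)) (by decide)

theorem exists_prefix_eq_block_append {a b : ℕ} {s p r : List Bool}
    (h : replicate a false ++ replicate b true ++ s = p ++ r)
    (hp : p.getLast? = some true) (hr : r.head? = some false) :
    ∃ m, p = replicate a false ++ replicate b true ++ m ∧ s = m ++ r := by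
  rcases append_eq_append_iff.1 h with h | ⟨_ | ⟨y, m⟩, hblock, hrest⟩
  · exact h
  · exact ⟨[], by simpa using hblock.symm, by simpa using hrest.symm⟩
  · refine absurd ?_ (head?_ne_some_false_of_append_eq_block hblock.symm hp)
    simp_all

theorem isValid_iff {w : List Bool} :
    isValid c d w ↔ ∀ p s : List Bool, ∀ a b : ℕ,
      w = p ++ (replicate a false ++ (replicate b true ++ s)) →
      p.getLast? ≠ some false → s.head? ≠ some true → 0 < a → d * b < c * a := by
  simp only [isValid, getLast?_ne_some_false_iff, head?_ne_some_true_iff, append_assoc]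

theorem isValid_nil : isValid c d [] := by
  rintro p s (_ | a) b h - - ha
  · exact absurd ha (lt_irrefl 0)
  · simp [replicate_succ] at h

theorem isValid.of_append {u s : List Bool} (h : isValid c d (u ++ s))
    (hu : u.getLast? ≠ some false) : isValid c d s := by
  rw [isValid_iff] at h ⊢
  intro p s' a b hs hp hs' ha
  refine h (u ++ p) s' a b (by simp [hs]) ?_ hs' ha
  rw [getLast?_append]
  cases hpl : p.getLast? <;> simp_all

theorem isValid_true_cons {w : List Bool} : isValid c d (true :: w) ↔ isValid c d w := by
  refine ⟨fun h => h.of_append (u := [true]) (by simp), fun h => ?_⟩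
  rw [isValid_iff] at h ⊢
  intro p s a b hw hp hs ha
  cases p with
  | nil => cases a <;> simp_all [replicate_succ]
  | cons x p =>
    obtain ⟨rfl, rfl⟩ : x = true ∧ w = p ++ _ := by simpa using hw
    refine h p s a b rfl ?_ hs ha
    cases p <;> simp_all

theorem isValid_block_append {a b : ℕ} {s : List Bool} (ha : 0 < a) (hs : s.head? ≠ some true)
    (hbs : b = 0 → s = []) :
    isValid c d (replicate a false ++ replicate b true ++ s) ↔ d * b < c * a ∧ isValid c d s := by
  constructor
  · intro h
    refine ⟨isValid_iff.1 h [] s a b (by simp) (by simp) hs ha, ?_⟩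
    rcases Nat.eq_zero_or_pos b with rfl | hb
    · rw [hbs rfl]; exact isValid_nil
    · exact h.of_append (by simp [getLast?_append, getLast?_replicate, hb.ne'])
  rintro ⟨hab, hvalid⟩
  rw [isValid_iff]
  intro p s' a' b' hw hp hs' ha'
  rcases eq_or_ne p [] with rfl | hpne
  · rcases Nat.eq_zero_or_pos b' with rfl | hb'
    · have hc : 0 < c := Nat.pos_of_mul_pos_right (hab.trans_le' (Nat.zero_le _))
      simpa using Nat.mul_pos hc ha'
    have hb : 0 < b := by
      refine Nat.pos_of_ne_zero fun hb => ?_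
      have := congrArg (true ∈ ·) hw
      simp [hb, hbs hb, hb'.ne'] at this
    obtain ⟨rfl, rfl, -⟩ := block_append_inj hb hb' hs hs' (by simpa [append_assoc] using hw)
    exact hab
  have hp' : p.getLast? = some true := by
    rcases getLast?_ne_some_false_iff.1 hp with h | h
    exacts [absurd h hpne, h]
  obtain ⟨m, rfl, rfl⟩ := exists_prefix_eq_block_append hw hp'
    (by simp [head?_append, head?_replicate, ha'.ne'])
  refine isValid_iff.1 hvalid m s' a' b' rfl ?_ hs' ha'
  rw [getLast?_append] at hp
  cases h : m.getLast? <;> simp_all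

end Words

section Counting

open Finset

noncomputable def validWords (c d n : ℕ) : Finset (List Bool) :=
  ((List.finite_length_eq Bool n).subset fun _ hw => hw.1 :
    {w : List Bool | w.length = n ∧ isValid c d w}.Finite).toFinset

theorem mem_validWords {n : ℕ} {w : List Bool} :
    w ∈ validWords c d n ↔ w.length = n ∧ isValid c d w :=
  Set.Finite.mem_toFinset _

theorem wcount_eq_card_validWords (c d n : ℕ) : wcount c d n = #(validWords c d n) :=
  Nat.card_eq_card_finite_toFinset _

/-- These are exactly the concatenations of admissible blocks `0^a 1^b` with `b > 0`, possibly
followed by a final run of zeros. -/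
noncomputable def blockWords (c d n : ℕ) : Finset (List Bool) :=
  (validWords c d n).filter (·.head? ≠ some true)

theorem mem_blockWords {n : ℕ} {w : List Bool} :
    w ∈ blockWords c d n ↔ w.length = n ∧ isValid c d w ∧ w.head? ≠ some true := by
  rw [blockWords, Finset.mem_filter, mem_validWords, and_assoc]

theorem card_validWords_succ (n : ℕ) :
    #(validWords c d (n + 1)) = #(validWords c d n) + #(blockWords c d (n + 1)) := by
  rw [← card_filter_add_card_filter_not (·.head? = some true)]
  congr 1
  have : (validWords c d (n + 1)).filter (·.head? = some true) =
      (validWords c d n).image (true :: ·) := by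
    ext w
    rcases w with _ | ⟨_ | _, w⟩ <;> simp [mem_validWords, isValid_true_cons]
  rw [this, card_image_of_injective _ List.cons_injective]

/-- The admissible blocks `0^a 1^(ℓ - a)` of length `ℓ` with at least one `1`, listed by their
number `a` of zeros. -/
def admissibleBlocks (c d ℓ : ℕ) : Finset ℕ :=
  (Finset.range ℓ).filter fun a => d * (ℓ - a) < c * a

theorem mem_admissibleBlocks {ℓ a : ℕ} :
    a ∈ admissibleBlocks c d ℓ ↔ a < ℓ ∧ d * (ℓ - a) < c * a := by
  rw [admissibleBlocks, Finset.mem_filter, Finset.mem_range]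

theorem admissible_block_append_inj {ℓ ℓ' a a' : ℕ} {z z' : List Bool}
    (ha : a ∈ admissibleBlocks c d ℓ) (ha' : a' ∈ admissibleBlocks c d ℓ')
    (hz : z.head? ≠ some true) (hz' : z'.head? ≠ some true)
    (h : replicate a false ++ replicate (ℓ - a) true ++ z =
      replicate a' false ++ replicate (ℓ' - a') true ++ z') :
    a = a' ∧ ℓ = ℓ' ∧ z = z' := by
  rw [mem_admissibleBlocks] at ha ha'
  obtain ⟨rfl, hℓ, rfl⟩ := block_append_inj (by omega) (by omega) hz hz' h
  exact ⟨rfl, by omega, rfl⟩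

theorem replicate_false_mem_blockWords (hc : 0 < c) (n : ℕ) :
    replicate n false ∈ blockWords c d n := by
  refine mem_blockWords.2 ⟨List.length_replicate, ?_, by simp [List.head?_replicate]⟩
  rcases Nat.eq_zero_or_pos n with rfl | hn
  · exact isValid_nil
  · simpa using (isValid_block_append (c := c) (d := d) (b := 0) hn (s := []) (by simp)
      fun _ => rfl).2 ⟨by simpa using Nat.mul_pos hc hn, isValid_nil⟩

theorem block_append_mem_blockWords {ℓ m a : ℕ} {z : List Bool}
    (ha : a ∈ admissibleBlocks c d ℓ) (hz : z ∈ blockWords c d m) :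
    replicate a false ++ replicate (ℓ - a) true ++ z ∈ blockWords c d (ℓ + m) := by
  rw [mem_admissibleBlocks] at ha
  obtain ⟨rfl, hz, hzhead⟩ := mem_blockWords.1 hz
  have ha₀ : 0 < a := Nat.pos_of_mul_pos_left (ha.2.trans_le' (Nat.zero_le _))
  refine mem_blockWords.2 ⟨?_, (isValid_block_append ha₀ hzhead (by omega)).2 ⟨ha.2, hz⟩, ?_⟩
  · simp only [List.length_append, List.length_replicate]
    omega
  · simp [List.head?_append, List.head?_replicate, ha₀.ne']

theorem eq_replicate_or_block_append_of_mem_blockWords {n : ℕ} {w : List Bool}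
    (hw : w ∈ blockWords c d n) :
    w = replicate n false ∨ ∃ ℓ m a z, ℓ + m = n ∧ a ∈ admissibleBlocks c d ℓ ∧
      z ∈ blockWords c d m ∧ w = replicate a false ++ replicate (ℓ - a) true ++ z := by
  obtain ⟨rfl, hw, hhead⟩ := mem_blockWords.1 hw
  obtain ⟨a, r, rfl, hr⟩ := List.exists_eq_replicate_append_head?_ne false w
  obtain ⟨b, s, rfl, hs⟩ := List.exists_eq_replicate_append_head?_ne true r
  rcases Nat.eq_zero_or_pos b with rfl | hb
  · obtain rfl : s = [] := by
      rw [← List.head?_eq_none_iff]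
      rcases h : s.head? with _ | _ | _ <;> simp_all
    simp
  have ha : 0 < a := by
    refine Nat.pos_of_ne_zero fun ha => hhead ?_
    simp [ha, List.head?_append, List.head?_replicate, hb.ne']
  rw [← List.append_assoc, isValid_block_append ha hs (by omega)] at hw
  refine Or.inr ⟨a + b, s.length, a, s, ?_, ?_, mem_blockWords.2 ⟨rfl, hw.2, hs⟩, by simp⟩
  · simp only [List.length_append, List.length_replicate]
    omega
  · exact mem_admissibleBlocks.2 ⟨by omega, by simpa using hw.1⟩

theorem blockWords_eq (hc : 0 < c) (n : ℕ) :
    blockWords c d n = insert (replicate n false) ((antidiagonal n).biUnion fun p =>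
      (admissibleBlocks c d p.1 ×ˢ blockWords c d p.2).image fun q =>
        replicate q.1 false ++ replicate (p.1 - q.1) true ++ q.2) := by
  ext w
  simp only [mem_insert, mem_biUnion, mem_image, Finset.mem_product,
    Finset.HasAntidiagonal.mem_antidiagonal, Prod.exists]
  constructor
  · intro hw
    rcases eq_replicate_or_block_append_of_mem_blockWords hw with rfl | ⟨ℓ, m, a, z, h, ha, hz, rfl⟩
    exacts [Or.inl rfl, Or.inr ⟨ℓ, m, h, a, z, ⟨ha, hz⟩, rfl⟩]
  · rintro (rfl | ⟨ℓ, m, rfl, a, z, ⟨ha, hz⟩, rfl⟩)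
    exacts [replicate_false_mem_blockWords hc n, block_append_mem_blockWords ha hz]

theorem card_blockWords (hc : 0 < c) (n : ℕ) :
    #(blockWords c d n) =
      1 + ∑ p ∈ antidiagonal n, #(admissibleBlocks c d p.1) * #(blockWords c d p.2) := by
  rw [blockWords_eq hc, card_insert_of_notMem, card_biUnion, add_comm]
  · refine congrArg (1 + ·) (sum_congr rfl fun p _ => ?_)
    rw [card_image_of_injOn, card_product]
    rintro ⟨a, z⟩ hq ⟨a', z'⟩ hq' h
    simp only [coe_product, Set.mem_prod, mem_coe, mem_blockWords] at hq hq'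
    obtain ⟨rfl, -, rfl⟩ := admissible_block_append_inj hq.1 hq'.1 hq.2.2.2 hq'.2.2.2 h
    rfl
  · rintro ⟨ℓ, m⟩ hp ⟨ℓ', m'⟩ hp' hne
    simp only [Function.onFun, disjoint_left, mem_image, Finset.mem_product, mem_blockWords,
      not_exists, not_and, Prod.forall]
    rintro w ⟨⟨a, z⟩, ⟨ha, -, -, hz⟩, rfl⟩ a' z' ⟨ha', -, -, hz'⟩ h
    obtain ⟨-, rfl, -⟩ := admissible_block_append_inj ha ha' hz hz' h.symm
    simp only [mem_coe, Finset.HasAntidiagonal.mem_antidiagonal] at hp hp'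
    exact hne (by rw [show m = m' by omega])
  · simp only [mem_biUnion, mem_image, not_exists, not_and, Prod.forall, Finset.mem_product,
      mem_admissibleBlocks]
    rintro ℓ m - a z ⟨⟨haℓ, -⟩, -⟩ h
    have : true ∈ replicate n false :=
      h ▸ List.mem_append_left _ (List.mem_append_right _ (List.mem_replicate.2 ⟨by omega, rfl⟩))
    simp at this

end Counting

section Series

open PowerSeries
open scoped Finset

theorem PowerSeries.coeff_X_mul' {R : Type*} [Semiring R] (p : R⟦X⟧) (n : ℕ) :
    coeff n (X * p) = if 1 ≤ n then coeff (n - 1) p else 0 := by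
  simpa using coeff_X_pow_mul' p 1 n

theorem mk_card_blockWords (hc : 0 < c) :
    mk (fun n => (#(blockWords c d n) : ℤ)) = mk 1 +
      mk (fun ℓ => (#(admissibleBlocks c d ℓ) : ℤ)) * mk (fun n => (#(blockWords c d n) : ℤ)) := by
  ext n
  rw [map_add, coeff_mul, coeff_mk, coeff_mk, card_blockWords hc]
  simp

theorem one_sub_X_mul_mk_card_validWords :
    (1 - X) * mk (fun n => (#(validWords c d n) : ℤ)) =
      mk (fun n => (#(blockWords c d n) : ℤ)) := by
  ext (_ | n)
  · have : blockWords c d 0 = validWords c d 0 :=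
      Finset.filter_true_of_mem fun w hw => by
        simp [List.eq_nil_of_length_eq_zero (mem_validWords.1 hw).1]
    simp [this]
  · simp [sub_mul, coeff_succ_X_mul, card_validWords_succ]

theorem card_admissibleBlocks_three_two (ℓ : ℕ) :
    #(admissibleBlocks 3 2 ℓ) = ℓ - 2 * ℓ / 5 - 1 := by
  rw [show admissibleBlocks 3 2 ℓ = Finset.Ioo (2 * ℓ / 5) ℓ by
    ext a; rw [mem_admissibleBlocks, Finset.mem_Ioo]; omega, Nat.card_Ioo]

theorem mk_card_admissibleBlocks_three_two :
    (1 - X) * (1 - X ^ 5) * mk (fun ℓ => (#(admissibleBlocks 3 2 ℓ) : ℤ)) =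
      X ^ 2 + X ^ 4 + X ^ 6 := by
  rw [show (1 - X) * (1 - X ^ 5) = (1 - X - X ^ 5 + X ^ 6 : ℤ⟦X⟧) by ring]
  ext n
  simp only [card_admissibleBlocks_three_two, add_mul, sub_mul, one_mul, map_add, map_sub, coeff_mk,
    coeff_X_mul', coeff_X_pow_mul', coeff_X_pow]
  have h₁ : 5 ≤ n → 2 * n / 5 = 2 * (n - 5) / 5 + 2 := by omega
  have h₂ : 6 ≤ n → 2 * (n - 1) / 5 = 2 * (n - 6) / 5 + 2 := by omega
  split_ifs <;> omega

theorem mk_wcount_three_two :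
    (1 - X - X ^ 2 - X ^ 4 - X ^ 5) * mk (fun n => (wcount 3 2 n : ℤ)) =
      1 + X + X ^ 2 + X ^ 3 + X ^ 4 := by
  set U := mk fun n => (#(blockWords 3 2 n) : ℤ)
  have hW : (1 - X) * mk (fun n => (wcount 3 2 n : ℤ)) = U := by
    simpa [wcount_eq_card_validWords] using one_sub_X_mul_mk_card_validWords
  have hU : U = mk 1 + _ * U := mk_card_blockWords (by norm_num)
  have hG : mk 1 * (1 - X) = (1 : ℤ⟦X⟧) := mk_one_mul_one_sub_eq_one ℤ
  have hX : (1 - X : ℤ⟦X⟧) ≠ 0 := fun h => by simpa using congrArg (coeff 0) h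
  refine mul_left_cancel₀ hX ?_
  linear_combination (1 - X - X ^ 2 - X ^ 4 - X ^ 5) * hW + (1 - X) * (1 - X ^ 5) * hU +
    (1 - X ^ 5) * hG + U * mk_card_admissibleBlocks_three_two

theorem wcount_three_two_sub_eq_ite (n : ℕ) :
    (wcount 3 2 n : ℤ) - (if 1 ≤ n then (wcount 3 2 (n - 1) : ℤ) else 0) -
      (if 2 ≤ n then (wcount 3 2 (n - 2) : ℤ) else 0) -
      (if 4 ≤ n then (wcount 3 2 (n - 4) : ℤ) else 0) -
      (if 5 ≤ n then (wcount 3 2 (n - 5) : ℤ) else 0) = if n ≤ 4 then 1 else 0 := by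
  have := congrArg (coeff n) mk_wcount_three_two
  simp only [sub_mul, map_sub, map_add, one_mul, coeff_mk, coeff_X_mul', coeff_X_pow_mul',
    coeff_X_pow, coeff_X, coeff_one] at this
  rw [this]
  split_ifs <;> omega

theorem wcount_three_two_recurrence {n : ℕ} (hn : 5 ≤ n) : wcount 3 2 n =
    wcount 3 2 (n - 1) + wcount 3 2 (n - 2) + wcount 3 2 (n - 4) + wcount 3 2 (n - 5) := by
  have := wcount_three_two_sub_eq_ite n
  split_ifs at this <;> omega

end Series

theorem stmt3 :
    (∀ n : ℕ, 5 ≤ n →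
      wcount 3 2 n =
        wcount 3 2 (n - 1) + wcount 3 2 (n - 2) + wcount 3 2 (n - 4) + wcount 3 2 (n - 5)) ∧
    wcount 3 2 0 = 1 ∧ wcount 3 2 1 = 2 ∧ wcount 3 2 2 = 4 ∧ wcount 3 2 3 = 7 ∧
    wcount 3 2 4 = 13 ∧ wcount 3 2 5 = 23 ∧ wcount 3 2 6 = 42 ∧ wcount 3 2 7 = 76 ∧
    wcount 3 2 8 = 138 := by
  have h0 := wcount_three_two_sub_eq_ite 0
  have h1 := wcount_three_two_sub_eq_ite 1
  have h2 := wcount_three_two_sub_eq_ite 2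
  have h3 := wcount_three_two_sub_eq_ite 3
  have h4 := wcount_three_two_sub_eq_ite 4
  have h5 := wcount_three_two_recurrence (n := 5) le_rfl
  have h6 := wcount_three_two_recurrence (n := 6) (by norm_num)
  have h7 := wcount_three_two_recurrence (n := 7) (by norm_num)
  have h8 := wcount_three_two_recurrence (n := 8) (by norm_num)
  norm_num at h0 h1 h2 h3 h4 h5 h6 h7 h8
  exact ⟨fun n => wcount_three_two_recurrence, by omega⟩
end
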